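/- Let X be a real inner product space, η > 0, and K : X → X a map satisfying ⟪K(u) − K(v), u − v⟫ ≥ η·‖u − v‖² for all u, v ∈ X. Let λ be a real number with 0 < λ ≤ 2·(1 + η)/(1 + 2η). Suppose sequences (x^k) and (p^k) in X satisfy x^k + K(x^k) = p^k and p^{k+1} = p^k + λ·(x^k − p^k) for all k, and suppose p* ∈ X satisfies K(p*) = 0. Then for all k: ‖p^k − p*‖ ≤ ((1 + (1 − λ)·η)/(1 + η))^k · ‖p^0 − p*‖; in particular the sequence (p^k) converges linearly to p*. -/

import Mathlib

/-!
With `d = p^k - p*` and `e = x^k - p*`, the resolvent equation and strong monotonicity give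
`(1 + η) ‖e‖² ≤ ⟪d, e⟫`, i.e. `e` lies in the closed ball with diameter `[0, d / (1 + η)]`.
Splitting `p^{k+1} - p* = d + λ (e - d)` into a multiple of `d` plus `λ` times the offset of `e`
from the centre of that ball, the triangle inequality bounds the step by
`(1 - λ + λ / (1 + η)) ‖d‖`. The upper bound on `λ` is exactly what keeps the coefficient of `d`
in this splitting nonnegative.
-/

open scoped RealInnerProductSpace

section InnerProductSpace

variable {X : Type*} [NormedAddCommGroup X] [InnerProductSpace ℝ X]

theorem norm_sub_half_smul_le_of_norm_sq_le_inner {d e : X} {c : ℝ} (hc : 0 ≤ c)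
    (h : ‖e‖ ^ 2 ≤ c * ⟪d, e⟫) : ‖e - (c / 2) • d‖ ≤ c / 2 * ‖d‖ := by
  have hsq : ‖e - (c / 2) • d‖ ^ 2 ≤ (c / 2 * ‖d‖) ^ 2 := by
    rw [norm_sub_sq_real, norm_smul, real_inner_smul_right, real_inner_comm,
      Real.norm_of_nonneg (by positivity)]
    linarith
  exact pow_le_pow_iff_left₀ (norm_nonneg _) (by positivity) two_ne_zero |>.mp hsq

theorem norm_add_smul_sub_le_of_norm_sq_le_inner {d e : X} {c t : ℝ} (hc : 0 ≤ c)
    (ht : 0 ≤ t) (htc : t * (2 - c) ≤ 2) (h : ‖e‖ ^ 2 ≤ c * ⟪d, e⟫) :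
    ‖d + t • (e - d)‖ ≤ (1 - t + t * c) * ‖d‖ := by
  have ha : 0 ≤ 1 - t + t * c / 2 := by linarith
  calc ‖d + t • (e - d)‖ = ‖(1 - t + t * c / 2) • d + t • (e - (c / 2) • d)‖ := by
        congr 1; module
    _ ≤ (1 - t + t * c / 2) * ‖d‖ + t * ‖e - (c / 2) • d‖ := by
        refine (norm_add_le _ _).trans_eq ?_
        rw [norm_smul, norm_smul, Real.norm_of_nonneg ha, Real.norm_of_nonneg ht]
    _ ≤ (1 - t + t * c / 2) * ‖d‖ + t * (c / 2 * ‖d‖) := by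
        gcongr
        exact norm_sub_half_smul_le_of_norm_sq_le_inner hc h
    _ = (1 - t + t * c) * ‖d‖ := by ring

theorem norm_add_smul_sub_le_of_one_add_mul_norm_sq_le_inner {d e : X} {η t : ℝ}
    (hη : 0 < 1 + 2 * η) (ht : 0 ≤ t) (htη : t ≤ 2 * (1 + η) / (1 + 2 * η))
    (h : (1 + η) * ‖e‖ ^ 2 ≤ ⟪d, e⟫) :
    ‖d + t • (e - d)‖ ≤ (1 + (1 - t) * η) / (1 + η) * ‖d‖ := by
  have hη1 : 0 < 1 + η := by linarith
  obtain ⟨c, hc, hc1⟩ : ∃ c : ℝ, 0 < c ∧ c * (1 + η) = 1 :=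
    ⟨(1 + η)⁻¹, inv_pos.mpr hη1, inv_mul_cancel₀ hη1.ne'⟩
  have hrate : (1 + (1 - t) * η) / (1 + η) = 1 - t + t * c := by
    rw [div_eq_iff hη1.ne']
    linear_combination (-t) * hc1
  have htc : t * (2 - c) ≤ 2 := by
    have h2c : 2 - c = (1 + 2 * η) / (1 + η) := by
      rw [eq_div_iff hη1.ne']
      linear_combination (-1 : ℝ) * hc1
    rw [h2c, mul_div_assoc', div_le_iff₀ hη1, ← le_div_iff₀ hη]
    exact htη
  rw [hrate]
  refine norm_add_smul_sub_le_of_norm_sq_le_inner hc.le ht htc ?_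
  calc ‖e‖ ^ 2 = c * ((1 + η) * ‖e‖ ^ 2) := by rw [← mul_assoc, hc1, one_mul]
    _ ≤ c * ⟪d, e⟫ := by gcongr

theorem one_add_mul_norm_sq_le_inner_of_add_eq {η : ℝ} {K : X → X}
    (hK : ∀ u v : X, η * ‖u - v‖ ^ 2 ≤ ⟪K u - K v, u - v⟫) {x p z : X} (hx : x + K x = p)
    (hz : K z = 0) : (1 + η) * ‖x - z‖ ^ 2 ≤ ⟪p - z, x - z⟫ := by
  have hpz : p - z = (x - z) + (K x - K z) := by
    rw [← hx, hz]
    abel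
  rw [hpz, inner_add_left, real_inner_self_eq_norm_sq]
  linarith [hK x z]

end InnerProductSpace

theorem relaxed_resolvent_linear_convergence
    {X : Type*} [NormedAddCommGroup X] [InnerProductSpace ℝ X]
    (η : ℝ) (hη : 0 < η) (K : X → X)
    (hK : ∀ u v : X, η * ‖u - v‖ ^ 2 ≤ ⟪K u - K v, u - v⟫)
    (lam : ℝ) (hlam0 : 0 < lam) (hlam : lam ≤ 2 * (1 + η) / (1 + 2 * η))
    (x p : ℕ → X) (pstar : X)
    (hx : ∀ k, x k + K (x k) = p k)
    (hp : ∀ k, p (k + 1) = p k + lam • (x k - p k))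
    (hstar : K pstar = 0) :
    ∀ k, ‖p k - pstar‖ ≤ ((1 + (1 - lam) * η) / (1 + η)) ^ k * ‖p 0 - pstar‖ := by
  have hη2 : 0 < 1 + 2 * η := by linarith
  have hstep (k : ℕ) :
      ‖p (k + 1) - pstar‖ ≤ (1 + (1 - lam) * η) / (1 + η) * ‖p k - pstar‖ := by
    rw [hp k, show p k + lam • (x k - p k) - pstar
      = (p k - pstar) + lam • ((x k - pstar) - (p k - pstar)) by module]
    exact norm_add_smul_sub_le_of_one_add_mul_norm_sq_le_inner hη2 hlam0.le hlam
      (one_add_mul_norm_sq_le_inner_of_add_eq hK (hx k) hstar)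
  have hrate_nonneg : 0 ≤ (1 + (1 - lam) * η) / (1 + η) := by
    rw [le_div_iff₀ hη2] at hlam
    exact div_nonneg (by nlinarith) (by linarith)
  exact fun k ↦ le_geom (u := fun k ↦ ‖p k - pstar‖) hrate_nonneg k fun j _ ↦ hstep j
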